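/- Let d≥1 and n∈ℕ. For the simple symmetric random walk (X_t)_{t≥0} on ℤ^d started at the origin o, the probability that the walk visits o exactly n times among the times 1,…,2n equals (2d)^{−n}; that is, P_o(n_o^{(2n)}(X) = n) = (2d)^{−n}. (Equivalently, among all (2d)^{2n} nearest-neighbour step sequences of length 2n, exactly (2d)^n of them satisfy |{j∈{1,…,2n} : X_j = o}| = n, namely those returning to o at every even time.) -/

import Mathlib

open scoped BigOperators ENNReal NNReal

namespace RWLS

variable {V : Type*}

/-- A rooted oriented loop, encoded as the full vertex sequence `(ℓ(0),…,ℓ(k))` with `k ≥ 1`,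
consecutive vertices adjacent, and `ℓ(k) = ℓ(0)`. -/
def IsLoopSeq (G : SimpleGraph V) (l : List V) : Prop :=
  2 ≤ l.length ∧ List.Chain' G.Adj l ∧ l.getLast? = l.head?

/-- Rooted oriented loops of a graph. -/
def Loop (G : SimpleGraph V) : Type _ := {l : List V // IsLoopSeq G l}

/-- The length `|ℓ| = k` of a rooted oriented loop. -/
def Loop.len {G : SimpleGraph V} (ℓ : Loop G) : ℕ := ℓ.val.length - 1

/-- The core `(ℓ(0),…,ℓ(k−1))` of a loop. -/
def Loop.core {G : SimpleGraph V} (ℓ : Loop G) : List V := ℓ.val.dropLast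

/-- `ℓ(i)`, the `i`-th vertex of a loop (read cyclically). -/
def Loop.vert {G : SimpleGraph V} (ℓ : Loop G) (i : ℕ) : V :=
  ℓ.core.get ⟨i % ℓ.core.length, Nat.mod_lt _ (by
    have h := ℓ.prop.1
    simp only [Loop.core, List.length_dropLast]
    omega)⟩

/-- Number of visits of the loop at `x` (the final time `k` is not counted). -/
def Loop.nx [DecidableEq V] {G : SimpleGraph V} (ℓ : Loop G) (x : V) : ℕ := ℓ.core.count x

/-- Configurations of the random walk loop soup:
finite ordered tuples of rooted oriented loops. -/
abbrev Config (G : SimpleGraph V) := List (Loop G)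

/-- The local time of a configuration at `x`. -/
def locTime [DecidableEq V] {G : SimpleGraph V} (ω : Config G) (x : V) : ℕ :=
  (ω.map fun ℓ => ℓ.nx x).sum

/-- The (unnormalised) weight of a configuration in the random walk loop soup. -/
noncomputable def weight [Fintype V] [DecidableEq V] (G : SimpleGraph V) (U : ℕ → ℝ)
    (N β : ℝ) (ω : Config G) : ℝ :=
  (1 / (Nat.factorial ω.length : ℝ)) * (N / 2) ^ ω.length *
    (ω.map fun ℓ => β ^ ℓ.len / (ℓ.len : ℝ)).prod * ∏ x : V, U (locTime ω x)

/-- The partition function of the random walk loop soup. -/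
noncomputable def Z [Fintype V] [DecidableEq V] (G : SimpleGraph V) (U : ℕ → ℝ)
    (N β : ℝ) : ℝ :=
  ∑' ω : Config G, weight G U N β ω

/-- The probability of an event under the random walk loop soup measure. -/
noncomputable def prob [Fintype V] [DecidableEq V] (G : SimpleGraph V) (U : ℕ → ℝ) (N β : ℝ)
    (A : Set (Config G)) : ℝ :=
  (∑' ω : A, weight G U N β (ω : Config G)) / Z G U N β

/-- The expectation of a function under the random walk loop soup measure. -/
noncomputable def expect [Fintype V] [DecidableEq V] (G : SimpleGraph V) (U : ℕ → ℝ) (N β : ℝ)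
    (f : Config G → ℝ) : ℝ :=
  (∑' ω : Config G, f ω * weight G U N β ω) / Z G U N β

/-- `U` is `M`-good: `U n ≤ (M/n) · U (n-1)` for all `n ≥ 1`. -/
def MGood (M : ℕ) (U : ℕ → ℝ) : Prop := ∀ n : ℕ, 1 ≤ n → U n ≤ ((M : ℝ) / n) * U (n - 1)

/-- `U` is good: `M`-good for some `M ∈ ℕ`. -/
def Good (U : ℕ → ℝ) : Prop := ∃ M : ℕ, 1 ≤ M ∧ MGood M U

/-- `U` takes non-negative values (it is a weight function). -/
def WeightFn (U : ℕ → ℝ) : Prop := ∀ n, 0 ≤ U n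

/-- `U` is nice: non-negative, good, `U 0 = 1`, `U ≤ 1`, and submultiplicative. -/
def Nice (U : ℕ → ℝ) : Prop :=
  WeightFn U ∧ Good U ∧ U 0 = 1 ∧ (∀ n, U n ≤ 1) ∧ ∀ m n : ℕ, U (m + n) ≤ U m * U n

/-- The event that some loop of the configuration visits both `x` and `y`. -/
def connEvent {G : SimpleGraph V} (x y : V) : Set (Config G) :=
  {ω | ∃ ℓ ∈ ω, x ∈ ℓ.val ∧ y ∈ ℓ.val}

end RWLS
namespace RWLS

/-- The unit step of `ℤ^d` indexed by a coordinate and a sign: the `2d` nearest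
neighbours of the origin. -/
def stepVec {d : ℕ} (p : Fin d × Bool) : Fin d → ℤ :=
  fun i => if i = p.1 then (if p.2 then 1 else -1) else 0

/-- Position after `j` steps of the simple random walk (started at the origin)
encoded by the step sequence `s`. -/
def walkPos {d k : ℕ} (s : Fin k → Fin d × Bool) (j : ℕ) : Fin d → ℤ :=
  ∑ i ∈ Finset.univ.filter (fun i : Fin k => (i : ℕ) < j), stepVec (s i)

/-- The number of visits `n_x^{(k)}(X)` of the walk at `x` during times `1,…,k`. -/
def nVisits {d k : ℕ} (s : Fin k → Fin d × Bool) (x : Fin d → ℤ) : ℕ :=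
  ((Finset.Icc 1 k).filter fun j => walkPos s j = x).card

/-- `χ_U(k) = E_o[∏_x U(n_x^{(k)}(X))]` for the simple random walk on `ℤ^d`: the average,
over the `(2d)^k` step sequences, of the product of `U` of the visit numbers (the product is
restricted to the visited sites, which is the full product whenever `U 0 = 1`). -/
noncomputable def chi (d : ℕ) (U : ℕ → ℝ) (k : ℕ) : ℝ :=
  ((2 * d : ℝ) ^ k)⁻¹ *
    ∑ s : Fin k → Fin d × Bool, ∏ x ∈ (Finset.Icc 1 k).image (walkPos s), U (nVisits s x)

/-- The lower bound `β̃_c(U)` for the critical inverse temperature, defined through the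
exponential rate of `χ_U`. -/
noncomputable def betaTilde (d : ℕ) (U : ℕ → ℝ) : ℝ≥0∞ :=
  ⨆ (β : ℝ≥0) (_ : 0 < β ∧
      Filter.limsup (fun k : ℕ => ((Real.log (chi d U k) / k : ℝ) : EReal)) Filter.atTop
        < ((-Real.log (2 * d * (β : ℝ)) : ℝ) : EReal)), (β : ℝ≥0∞)

end RWLS

namespace RWLS

/-- Flip the sign of a step. -/
def flipP {d : ℕ} (p : Fin d × Bool) : Fin d × Bool := (p.1, !p.2)

lemma stepVec_flipP {d : ℕ} (p : Fin d × Bool) : stepVec (flipP p) = - stepVec p := by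
  obtain ⟨a, b⟩ := p
  funext i
  simp only [stepVec, flipP, Pi.neg_apply]
  by_cases h : i = a <;> cases b <;> simp [h]

lemma stepVec_injective {d : ℕ} : Function.Injective (stepVec (d := d)) := by
  rintro ⟨a, b⟩ ⟨c, e⟩ h
  by_cases hac : a = c
  · subst hac
    have := congrFun h a
    simp only [stepVec, if_pos rfl] at this
    cases b <;> cases e <;> simp_all
  · have := congrFun h a
    simp only [stepVec, if_pos rfl, if_neg hac] at this
    cases b <;> simp at this
  
lemma sum_stepVec {d : ℕ} (hd : 1 ≤ d) (p : Fin d × Bool) :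
    ∑ i, stepVec p i = if p.2 then 1 else -1 := by
  have : ∑ i : Fin d, stepVec p i
      = ∑ i : Fin d, if i = p.1 then (if p.2 then (1:ℤ) else -1) else 0 := rfl
  rw [this, Finset.sum_ite_eq' Finset.univ p.1 (fun _ => if p.2 then (1:ℤ) else -1)]
  simp

lemma card_filter_lt {k j : ℕ} (hj : j ≤ k) :
    (Finset.univ.filter fun i : Fin k => (i : ℕ) < j).card = j := by
  have : (Finset.univ.filter fun i : Fin k => (i : ℕ) < j)
      = Finset.image (Fin.castLE hj) Finset.univ := by
    ext i
    simp only [Finset.mem_filter, Finset.mem_univ, true_and, Finset.mem_image]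
    constructor
    · intro h
      refine ⟨⟨i, h⟩, ?_⟩
      rfl
    · rintro ⟨a, rfl⟩
      exact a.isLt
  rw [this, Finset.card_image_of_injective _ (Fin.castLE_injective hj)]
  simp

lemma walkPos_parity {d k : ℕ} (hd : 1 ≤ d) (s : Fin k → Fin d × Bool) (j : ℕ) (hj : j ≤ k) :
    (((∑ i, walkPos s j i : ℤ)) : ZMod 2) = (j : ZMod 2) := by
  have h1 : ∑ i, walkPos s j i
      = ∑ t ∈ Finset.univ.filter (fun i : Fin k => (i : ℕ) < j), ∑ i, stepVec (s t) i := by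
    rw [walkPos]
    rw [← Finset.sum_comm]
    congr 1
    funext i
    rw [Finset.sum_apply]
  rw [h1, Int.cast_sum]
  have h2 : ∀ t ∈ Finset.univ.filter (fun i : Fin k => (i : ℕ) < j),
      ((∑ i, stepVec (s t) i : ℤ) : ZMod 2) = 1 := by
    intro t _
    rw [sum_stepVec hd]
    cases (s t).2 <;> simp <;> decide
  rw [Finset.sum_congr rfl h2, Finset.sum_const, card_filter_lt hj, nsmul_eq_mul, mul_one]

lemma walkPos_ne_zero_of_odd {d k : ℕ} (hd : 1 ≤ d) (s : Fin k → Fin d × Bool) (j : ℕ)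
    (hj : j ≤ k) (hodd : j % 2 = 1) : walkPos s j ≠ (0 : Fin d → ℤ) := by
  intro h
  have := walkPos_parity hd s j hj
  rw [h] at this
  simp only [Pi.zero_apply, Finset.sum_const_zero, Int.cast_zero] at this
  have : ((j : ℤ) : ZMod 2) = 0 := by exact_mod_cast this.symm
  rw [ZMod.intCast_zmod_eq_zero_iff_dvd] at this
  omega

lemma walkPos_zero {d k : ℕ} (s : Fin k → Fin d × Bool) : walkPos s 0 = 0 := by
  unfold walkPos
  have : (Finset.univ.filter fun i : Fin k => (i : ℕ) < 0) = ∅ := by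
    ext i; simp
  rw [this, Finset.sum_empty]

lemma walkPos_succ {d k : ℕ} (s : Fin k → Fin d × Bool) (j : ℕ) (hj : j < k) :
    walkPos s (j + 1) = walkPos s j + stepVec (s ⟨j, hj⟩) := by
  unfold walkPos
  have h1 : (Finset.univ.filter fun i : Fin k => (i : ℕ) < j + 1)
      = insert ⟨j, hj⟩ (Finset.univ.filter fun i : Fin k => (i : ℕ) < j) := by
    ext i
    simp only [Finset.mem_filter, Finset.mem_univ, true_and, Finset.mem_insert, Fin.ext_iff]
    omega
  have h2 : (⟨j, hj⟩ : Fin k) ∉ (Finset.univ.filter fun i : Fin k => (i : ℕ) < j) := by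
    simp
  rw [h1, Finset.sum_insert h2]
  ring

lemma nVisits_eq_iff {d n : ℕ} (hd : 1 ≤ d) (hn : 1 ≤ n) (s : Fin (2 * n) → Fin d × Bool) :
    nVisits s (0 : Fin d → ℤ) = n ↔ ∀ i < n, walkPos s (2 * (i + 1)) = 0 := by
  classical
  set A := (Finset.Icc 1 (2 * n)).filter (fun j => walkPos s j = (0 : Fin d → ℤ)) with hA
  set B := Finset.image (fun i => 2 * (i + 1)) (Finset.range n) with hB
  have hAB : A ⊆ B := by
    intro j hj
    simp only [hA, Finset.mem_filter, Finset.mem_Icc] at hj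
    obtain ⟨⟨h1, h2⟩, h3⟩ := hj
    have hpar : j % 2 = 0 := by
      by_contra hodd
      exact walkPos_ne_zero_of_odd hd s j h2 (by omega) h3
    simp only [hB, Finset.mem_image, Finset.mem_range]
    exact ⟨j / 2 - 1, by omega, by omega⟩
  have hBcard : B.card = n := by
    rw [hB, Finset.card_image_of_injective _ (fun a b h => by omega), Finset.card_range]
  have hnv : nVisits s (0 : Fin d → ℤ) = A.card := by
    rw [nVisits, hA]
  constructor
  · intro h i hi
    have hcard : B.card ≤ A.card := by rw [hBcard, ← hnv, h]
    have hEq : A = B := Finset.eq_of_subset_of_card_le hAB hcard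
    have hmem : 2 * (i + 1) ∈ B := by
      simp only [hB, Finset.mem_image, Finset.mem_range]
      exact ⟨i, hi, rfl⟩
    rw [← hEq, hA, Finset.mem_filter] at hmem
    exact hmem.2
  · intro h
    have hBA : B ⊆ A := by
      intro j hj
      simp only [hB, Finset.mem_image, Finset.mem_range] at hj
      obtain ⟨i, hi, rfl⟩ := hj
      simp only [hA, Finset.mem_filter, Finset.mem_Icc]
      exact ⟨⟨by omega, by omega⟩, h i hi⟩
    rw [hnv, Finset.Subset.antisymm hAB hBA, hBcard]

lemma allReturn_iff {d n : ℕ} (s : Fin (2 * n) → Fin d × Bool) :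
    (∀ i < n, walkPos s (2 * (i + 1)) = 0) ↔
    ∀ i : ℕ, ∀ h : i < n,
      s ⟨2 * i + 1, by omega⟩ = flipP (s ⟨2 * i, by omega⟩) := by
  constructor
  · intro h i hi
    have h2i : walkPos s (2 * i) = 0 := by
      rcases Nat.eq_zero_or_pos i with h0 | h0
      · subst h0; exact walkPos_zero s
      · have := h (i - 1) (by omega)
        have he : 2 * (i - 1 + 1) = 2 * i := by omega
        rwa [he] at this
    have hstep : walkPos s (2 * (i + 1)) =
        walkPos s (2 * i) + stepVec (s ⟨2 * i, by omega⟩)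
          + stepVec (s ⟨2 * i + 1, by omega⟩) := by
      have e1 : 2 * (i + 1) = (2 * i + 1) + 1 := by omega
      rw [e1, walkPos_succ s (2 * i + 1) (by omega), walkPos_succ s (2 * i) (by omega)]
    have h0 := h i hi
    rw [hstep, h2i, zero_add] at h0
    have h1 := eq_neg_of_add_eq_zero_right h0
    exact stepVec_injective (by rw [h1, stepVec_flipP])
  · intro h
    have key : ∀ i : ℕ, i ≤ n → walkPos s (2 * i) = 0 := by
      intro i
      induction i with
      | zero => intro _; exact walkPos_zero s
      | succ i ih =>
        intro hi
        have h2i := ih (by omega)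
        have e1 : 2 * (i + 1) = (2 * i + 1) + 1 := by omega
        rw [e1, walkPos_succ s (2 * i + 1) (by omega), walkPos_succ s (2 * i) (by omega),
          h2i, h i (by omega), stepVec_flipP]
        abel
    intro i hi
    exact key (i + 1) (by omega)

/-- The map sending `n` free steps to the `2n`-step sequence that undoes every step
immediately. -/
def pairMap {d n : ℕ} (t : Fin n → Fin d × Bool) : Fin (2 * n) → Fin d × Bool :=
  fun i => if (i : ℕ) % 2 = 0 then t ⟨(i : ℕ) / 2, by have := i.2; omega⟩
           else flipP (t ⟨(i : ℕ) / 2, by have := i.2; omega⟩)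

lemma pairMap_injective {d n : ℕ} : Function.Injective (pairMap (d := d) (n := n)) := by
  intro t t' h
  funext j
  have hj : 2 * (j : ℕ) < 2 * n := by have := j.2; omega
  have hc := congrFun h ⟨2 * (j : ℕ), hj⟩
  simp only [pairMap] at hc
  rw [if_pos (by simp [Nat.mul_mod_right]), if_pos (by simp [Nat.mul_mod_right])] at hc
  have he : (⟨(2 * (j : ℕ)) / 2, by have := j.2; omega⟩ : Fin n) = j := by
    apply Fin.ext; simp
  rwa [he] at hc

lemma filter_eq_image {d n : ℕ} (hd : 1 ≤ d) (hn : 1 ≤ n) :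
    (Finset.univ.filter fun s : Fin (2 * n) → Fin d × Bool =>
      nVisits s (0 : Fin d → ℤ) = n)
    = Finset.image pairMap Finset.univ := by
  ext s
  simp only [Finset.mem_filter, Finset.mem_univ, true_and, Finset.mem_image]
  rw [nVisits_eq_iff hd hn, allReturn_iff]
  constructor
  · intro hQ
    refine ⟨fun j => s ⟨2 * (j : ℕ), by have := j.2; omega⟩, ?_⟩
    funext i
    have hi2 := i.2
    by_cases hpar : (i : ℕ) % 2 = 0
    · simp only [pairMap, if_pos hpar]
      congr 1
      apply Fin.ext
      simp
      omega
    · simp only [pairMap, if_neg hpar]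
      have hdiv : (i : ℕ) / 2 < n := by omega
      have hq := (hQ ((i : ℕ) / 2) hdiv).symm
      have he1 : (⟨2 * ((i : ℕ) / 2) + 1, by omega⟩ : Fin (2 * n)) = i := by
        apply Fin.ext; simp; omega
      rw [he1] at hq
      rw [← hq]
  · rintro ⟨t, rfl⟩
    intro i hi
    simp only [pairMap]
    rw [if_neg (by simp), if_pos (by simp [Nat.mul_mod_right])]
    congr 2
    apply Fin.ext
    simp
    omega

end RWLS

open RWLS in
theorem statement4 (d n : ℕ) (hd : 1 ≤ d) (hn : 1 ≤ n) :
    ((Finset.univ.filter fun s : Fin (2 * n) → Fin d × Bool =>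
        nVisits s (0 : Fin d → ℤ) = n).card : ℝ) / (2 * d : ℝ) ^ (2 * n)
      = ((2 * d : ℝ) ^ n)⁻¹ := by
  have hcard : (Finset.univ.filter fun s : Fin (2 * n) → Fin d × Bool =>
        nVisits s (0 : Fin d → ℤ) = n).card = (2 * d) ^ n := by
    rw [filter_eq_image hd hn, Finset.card_image_of_injective _ pairMap_injective,
      Finset.card_univ, Fintype.card_fun]
    simp [Fintype.card_prod]
    ring
  rw [hcard]
  push_cast
  have hd0 : (0 : ℝ) < (d : ℝ) := by exact_mod_cast hd
  have h0 : (2 * (d : ℝ)) ^ n ≠ 0 := by positivity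
  rw [two_mul n, pow_add, div_mul_eq_div_div, div_self h0, one_div]
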